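/- Let a, b be integers, c a natural number, and z₁, z₂ complex numbers with |z₁| > |z₂| > 0. Then the series ∑_{l=0}^{∞} (−1)^{l} · C(−b−1, l) · C(c−a−l, c) · z₁^{−b−1−l} · z₂^{a−c+l−1} converges absolutely, and its sum equals the finite sum ∑_{k=0}^{c} C(k−a, k) · C(−b−1, c−k) · z₂^{a−k−1} · (z₁−z₂)^{−b−1−c+k}. (Note that |z₁| > |z₂| forces z₁ ≠ 0 and z₁ ≠ z₂, so all the integer powers appearing are defined.) -/

import Mathlib

/-- The generalized binomial coefficient `C(n, j) = n(n-1)⋯(n-j+1)/j!`,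
regarded as a complex number (equal to `1` when `j = 0`). -/
noncomputable def cbinom (n : ℤ) (j : ℕ) : ℂ :=
  (∏ i ∈ Finset.range j, ((n : ℂ) - (i : ℂ))) / (Nat.factorial j : ℂ)

/-!
Expand each summand `(z₁ - z₂) ^ (m - c + k)` of the right-hand side by the binomial series in
`z₂ / z₁` (convergent since `‖z₂‖ < ‖z₁‖`). After reindexing by the total power `n` of `z₂`,
the trinomial revision `C(m, c - k) C(m - c + k, n - c + k) = C(m, n) C(n, c - k)` makes the
coefficient of `z₁ ^ (m - n) z₂ ^ (a - c + n - 1)` a Chu–Vandermonde sum, which upper negation turns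
into `(-1) ^ n C(m, n) C(c - a - n, c)`. Every series involved converges absolutely, so the finite
sum over `k` can be exchanged with the sum over `n`.
-/

open Finset

theorem cbinom_eq_choose (n : ℤ) (j : ℕ) : cbinom n j = Ring.choose (n : ℂ) j := by
  rw [Ring.choose_eq_smul, ← Polynomial.aeval_eq_smeval, Polynomial.aeval_def,
    ← Polynomial.eval_map, descPochhammer_map, descPochhammer_eval_eq_prod_range, cbinom,
    smul_eq_mul, div_eq_inv_mul]

namespace Ring

variable {R : Type*} [CommRing R] [BinomialRing R]

theorem choose_natCast_sub_sub_eq_sum (a : R) (c n : ℕ) :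
    choose (c - a - n) c =
      ∑ k ∈ range (c + 1), (-1) ^ (c - k) * choose (k - a) k * n.choose (c - k) := by
  have choose_natCast_sub (r : R) (j : ℕ) : choose (j - r) j = (-1) ^ j * choose (r - 1) j := by
    rw [show (j : R) - r = -(r - j) by abel, choose_neg, Units.smul_def,
      Int.coe_negOnePow_natCast, sub_add_cancel, zsmul_eq_mul]
    push_cast
    rfl
  rw [show (c : R) - a - n = c - (a + n) by ring, choose_natCast_sub,
    show a + n - 1 = (a - 1) + n by ring, add_choose_eq c (Commute.all _ _),
    Nat.sum_antidiagonal_eq_sum_range_succ_mk, mul_sum]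
  refine sum_congr rfl fun k hk ↦ ?_
  rw [choose_natCast_sub, choose_natCast, ← pow_sub_mul_pow (-1 : R) (mem_range_succ_iff.mp hk)]
  ring

theorem natChoose_mul_choose_mul_pow_add (a x : R) (j n : ℕ) :
    ((n + j).choose j : R) * choose a (n + j) * x ^ (n + j) =
      choose a j * x ^ j * (choose (a - j) n * x ^ n) := by
  rw [← nsmul_eq_mul, choose_smul_choose a (Nat.le_add_left j n), Nat.add_sub_cancel]
  ring

end Ring

theorem zpow_sub_natCast_mul_pow {K : Type*} [Field K] {z : K} (hz : z ≠ 0) (m : ℤ) (w : K)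
    (n : ℕ) : z ^ (m - n) * w ^ n = z ^ m * (w / z) ^ n := by
  rw [zpow_sub₀ hz, div_pow, zpow_natCast]
  ring

theorem summable_norm_and_tsum_eq_sum_of_eq_sum {ι β E : Type*} [NormedAddCommGroup E]
    (s : Finset ι) {f : β → E} {g : ι → β → E} {v : ι → E}
    (hf : ∀ n, f n = ∑ k ∈ s, g k n) (hg : ∀ k ∈ s, HasSum (g k) (v k))
    (hg_norm : ∀ k ∈ s, Summable fun n ↦ ‖g k n‖) :
    Summable (fun n ↦ ‖f n‖) ∧ ∑' n, f n = ∑ k ∈ s, v k := by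
  simp only [hf]
  exact ⟨(summable_sum hg_norm).of_nonneg_of_le (fun _ ↦ norm_nonneg _) fun n ↦ norm_sum_le _ _,
    (hasSum_sum hg).tsum_eq⟩

namespace Complex

theorem hasSum_choose_mul_pow (a : ℂ) {x : ℂ} (hx : ‖x‖ < 1) :
    HasSum (fun n ↦ Ring.choose a n * x ^ n) ((1 + x) ^ a) := by
  have hx' : x ∈ Metric.eball (0 : ℂ) 1 := by
    rw [← ENNReal.ofReal_one, Metric.eball_ofReal]
    simpa using hx
  simpa [binomialSeries, FormalMultilinearSeries.ofScalars_apply_eq, mul_comm] using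
    (one_add_cpow_hasFPowerSeriesOnBall_zero (a := a)).hasSum hx'

theorem summable_norm_choose_mul_pow (a : ℂ) {x : ℂ} (hx : ‖x‖ < 1) :
    Summable (fun n ↦ ‖Ring.choose a n * x ^ n‖) := by
  have hx' : x ∈ Metric.eball (0 : ℂ) 1 := by
    rw [← ENNReal.ofReal_one, Metric.eball_ofReal]
    simpa using hx
  simpa [binomialSeries, FormalMultilinearSeries.ofScalars_apply_eq, mul_comm] using
    (binomialSeries ℂ a).summable_norm_apply (hx'.trans_le binomialSeries_radius_ge_one)

theorem hasSum_natChoose_mul_choose_mul_pow (a : ℂ) (j : ℕ) {x : ℂ} (hx : ‖x‖ < 1) :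
    HasSum (fun n ↦ (n.choose j : ℂ) * Ring.choose a n * x ^ n)
      (Ring.choose a j * x ^ j * (1 + x) ^ (a - j)) := by
  rw [← hasSum_nat_add_iff' j, sum_eq_zero fun n hn ↦ by
    rw [Nat.choose_eq_zero_of_lt (mem_range.mp hn)]; simp, sub_zero]
  simpa only [Ring.natChoose_mul_choose_mul_pow_add] using
    (hasSum_choose_mul_pow (a - j) hx).mul_left (Ring.choose a j * x ^ j)

theorem summable_norm_natChoose_mul_choose_mul_pow (a : ℂ) (j : ℕ) {x : ℂ} (hx : ‖x‖ < 1) :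
    Summable (fun n ↦ ‖(n.choose j : ℂ) * Ring.choose a n * x ^ n‖) := by
  rw [← summable_nat_add_iff j]
  simpa only [Ring.natChoose_mul_choose_mul_pow_add, norm_mul (_ * _)] using
    (summable_norm_choose_mul_pow (a - j) hx).mul_left ‖Ring.choose a j * x ^ j‖

theorem hasSum_natChoose_mul_choose_mul_zpow_mul_pow (m : ℤ) (j : ℕ) {z w : ℂ}
    (h : ‖w‖ < ‖z‖) :
    HasSum (fun n ↦ (n.choose j : ℂ) * Ring.choose (m : ℂ) n * z ^ (m - n) * w ^ n)
      (Ring.choose (m : ℂ) j * w ^ j * (z + w) ^ (m - j)) := by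
  have hz : z ≠ 0 := norm_pos_iff.mp ((norm_nonneg w).trans_lt h)
  have hx : ‖w / z‖ < 1 := by rwa [norm_div, div_lt_one (norm_pos_iff.mpr hz)]
  have hsum : Ring.choose (m : ℂ) j * w ^ j * (z + w) ^ (m - j) =
      z ^ m * (Ring.choose (m : ℂ) j * (w / z) ^ j * (1 + w / z) ^ ((m : ℂ) - j)) := by
    rw [show z + w = z * (1 + w / z) by field_simp, mul_zpow, ← cpow_intCast (1 + _),
      zpow_sub₀ hz, div_pow, zpow_natCast]
    push_cast
    field_simp
  rw [hsum]
  refine ((hasSum_natChoose_mul_choose_mul_pow m j hx).mul_left (z ^ m)).congr_fun fun n ↦ ?_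
  rw [mul_assoc _ (z ^ _), zpow_sub_natCast_mul_pow hz]
  ring

theorem summable_norm_natChoose_mul_choose_mul_zpow_mul_pow (m : ℤ) (j : ℕ) {z w : ℂ}
    (h : ‖w‖ < ‖z‖) :
    Summable (fun n ↦ ‖(n.choose j : ℂ) * Ring.choose (m : ℂ) n * z ^ (m - n) * w ^ n‖) := by
  have hz : z ≠ 0 := norm_pos_iff.mp ((norm_nonneg w).trans_lt h)
  have hx : ‖w / z‖ < 1 := by rwa [norm_div, div_lt_one (norm_pos_iff.mpr hz)]
  refine ((summable_norm_natChoose_mul_choose_mul_pow m j hx).mul_left ‖z ^ m‖).congr fun n ↦ ?_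
  rw [← norm_mul, mul_assoc _ (z ^ _), zpow_sub_natCast_mul_pow hz]
  ring_nf

end Complex

open Complex

/-- The `k`-th summand `C(k - a, k) C(m, c - k) z₂ ^ (a - k - 1) (z₁ - z₂) ^ (m - c + k)` of the
right-hand side, expanded in powers of `z₂ / z₁`; `n` is the total power of `z₂` it contributes
beyond `z₂ ^ (a - c - 1)`. -/
noncomputable def summandExpansion (a m : ℤ) (c : ℕ) (z₁ z₂ : ℂ) (k n : ℕ) : ℂ :=
  (-1) ^ (c - k) * Ring.choose ((k - a : ℤ) : ℂ) k * z₂ ^ (a - c - 1) *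
    ((n.choose (c - k) : ℂ) * Ring.choose (m : ℂ) n * z₁ ^ (m - n) * (-z₂) ^ n)

section summandExpansion

variable (a m : ℤ) (c : ℕ) {z₁ z₂ : ℂ}

theorem hasSum_summandExpansion (h : ‖z₂‖ < ‖z₁‖) (hz₂ : z₂ ≠ 0) {k : ℕ} (hk : k ≤ c) :
    HasSum (summandExpansion a m c z₁ z₂ k) (cbinom ((k : ℤ) - a) k * cbinom m (c - k) *
      z₂ ^ (a - (k : ℤ) - 1) * (z₁ - z₂) ^ (m - (c : ℤ) + (k : ℤ))) := by
  have hsign : (-1 : ℂ) ^ (c - k) * (-z₂) ^ (c - k) = z₂ ^ (c - k) := by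
    rw [← mul_pow, neg_one_mul, neg_neg]
  have hval : cbinom ((k : ℤ) - a) k * cbinom m (c - k) * z₂ ^ (a - k - 1) *
      (z₁ - z₂) ^ (m - c + k) =
      ((-1) ^ (c - k) * Ring.choose ((k - a : ℤ) : ℂ) k * z₂ ^ (a - c - 1)) *
        (Ring.choose (m : ℂ) (c - k) * (-z₂) ^ (c - k) * (z₁ + -z₂) ^ (m - (c - k : ℕ))) := by
    rw [cbinom_eq_choose, cbinom_eq_choose, ← sub_eq_add_neg, Nat.cast_sub hk,
      show m - (c - k) = m - c + k by ring,
      show a - k - 1 = a - c - 1 + (c - k : ℕ) by push_cast [hk]; ring, zpow_add₀ hz₂,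
      zpow_natCast, ← hsign]
    ring
  rw [hval]
  exact (hasSum_natChoose_mul_choose_mul_zpow_mul_pow m (c - k) (by rwa [norm_neg])).mul_left _

theorem summable_norm_summandExpansion (h : ‖z₂‖ < ‖z₁‖) (k : ℕ) :
    Summable fun n ↦ ‖summandExpansion a m c z₁ z₂ k n‖ := by
  simpa only [summandExpansion, norm_mul (_ * _ * _)] using
    (summable_norm_natChoose_mul_choose_mul_zpow_mul_pow m (c - k)
      (by rwa [norm_neg] : ‖-z₂‖ < ‖z₁‖)).mul_left _

theorem term_eq_sum_summandExpansion (hz₂ : z₂ ≠ 0) (n : ℕ) :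
    (-1 : ℂ) ^ n * cbinom m n * cbinom ((c : ℤ) - a - (n : ℤ)) c * z₁ ^ (m - (n : ℤ)) *
      z₂ ^ (a - (c : ℤ) + (n : ℤ) - 1) =
      ∑ k ∈ range (c + 1), summandExpansion a m c z₁ z₂ k n := by
  rw [show a - c + n - 1 = (a - c - 1) + n by ring, zpow_add₀ hz₂, zpow_natCast,
    cbinom_eq_choose, cbinom_eq_choose]
  push_cast
  simp only [summandExpansion, Ring.choose_natCast_sub_sub_eq_sum, mul_sum, sum_mul]
  refine sum_congr rfl fun k _ ↦ ?_
  push_cast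
  rw [neg_pow]
  ring

end summandExpansion

theorem delta_identity_coefficients_14_11 (a b : ℤ) (c : ℕ) (z₁ z₂ : ℂ)
    (h₁ : ‖z₂‖ < ‖z₁‖) (h₂ : 0 < ‖z₂‖) :
    Summable (fun l : ℕ => ‖(-1 : ℂ) ^ l * cbinom (-b - 1) l * cbinom ((c : ℤ) - a - (l : ℤ)) c *
        z₁ ^ (-b - 1 - (l : ℤ)) * z₂ ^ (a - (c : ℤ) + (l : ℤ) - 1)‖) ∧
    ∑' l : ℕ, (-1 : ℂ) ^ l * cbinom (-b - 1) l * cbinom ((c : ℤ) - a - (l : ℤ)) c *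
        z₁ ^ (-b - 1 - (l : ℤ)) * z₂ ^ (a - (c : ℤ) + (l : ℤ) - 1)
      = ∑ k ∈ Finset.range (c + 1), cbinom ((k : ℤ) - a) k * cbinom (-b - 1) (c - k) *
        z₂ ^ (a - (k : ℤ) - 1) * (z₁ - z₂) ^ (-b - 1 - (c : ℤ) + (k : ℤ)) := by
  have hz₂ : z₂ ≠ 0 := norm_pos_iff.mp h₂
  exact summable_norm_and_tsum_eq_sum_of_eq_sum (range (c + 1))
    (term_eq_sum_summandExpansion a (-b - 1) c hz₂)
    (fun k hk ↦ hasSum_summandExpansion a (-b - 1) c h₁ hz₂ (mem_range_succ_iff.mp hk))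
    (fun k _ ↦ summable_norm_summandExpansion a (-b - 1) c h₁ k)
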